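/- arXiv:1509.04500 — 2 statements merged into one kernel-verified Lean document; each statement's English description precedes it below -/
import Mathlib

section
/- Let Γ be a discrete subring of ℂ, let f : ℂ → Γ be a Γ-valued algorithm whose fundamental set is contained in the ball of radius r centered at 0, where 0 < r < 1, and let K be the subfield of ℂ generated by Γ. Let z ∈ ℂ \ K, let (z_n)_{n≥0} be the iteration sequence of z with respect to f, (a_n)_{n≥0} the associated partial quotients, and (p_n), (q_n) the corresponding Q-pair. Then: (i) q_n ≠ 0 for all n ≥ 0 and p_n/q_n → z as n → ∞; and (ii) for every n such that |q_{n−1}| < |q_n| one has |z − p_n/q_n| ≤ (r/(1−r))·|q_n|^{−2}. -/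
/-!
Put `u_n = z_n - a_n`, so that `u_n z_{n+1} = 1` and `|u_n| ≤ r`. The identity
`z = (z_{n+1} p_n + p_{n-1}) / (z_{n+1} q_n + q_{n-1})` shows that the remainder `q_n z - p_n` is
multiplied by `-u_n` at each step, so it decays like `r^{n+1}`, and that the remainder times its
denominator `z_{n+1} q_n + q_{n-1}` is `±1`. Nonzero elements of a discrete subring have norm at
least `1`, so the decay forces `q_n ≠ 0` and gives convergence, while `|z_{n+1}| ≥ 1/r` bounds the
denominator below by `(1 - r)/r |q_n|` as soon as `|q_{n-1}| ≤ |q_n|`.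
-/

open Filter Topology

theorem Subring.one_le_norm_of_mem {R : Type*} [NormedRing R] [NoZeroDivisors R]
    (S : Subring R) [DiscreteTopology S] {x : R} (hx : x ∈ S) (hx0 : x ≠ 0) : 1 ≤ ‖x‖ := by
  by_contra! hlt
  have hpow : Tendsto (fun n : ℕ => (⟨x ^ n, pow_mem hx n⟩ : S)) atTop (𝓝 0) := by
    rw [tendsto_subtype_rng]
    exact tendsto_pow_atTop_nhds_zero_of_norm_lt_one hlt
  rw [nhds_discrete, tendsto_pure] at hpow
  obtain ⟨n, hn⟩ := hpow.exists
  exact pow_ne_zero n hx0 (congrArg Subtype.val hn)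

theorem Subring.mem_of_mul_add_recurrence {R : Type*} [Ring R] {S : Subring R} {a s : ℕ → R}
    (ha : ∀ n, a n ∈ S) (hs0 : s 0 ∈ S) (hs1 : s 1 ∈ S)
    (hs : ∀ n, s (n + 2) = a (n + 1) * s (n + 1) + s n) (n : ℕ) : s n ∈ S := by
  induction n using Nat.twoStepInduction with
  | zero => exact hs0
  | one => exact hs1
  | more n ih ih' => rw [hs]; exact add_mem (mul_mem (ha _) ih') ih

theorem Subfield.inv_sub_notMem {F : Type*} [Field F] {K : Subfield F} {w c : F}
    (hw : w ∉ K) (hc : c ∈ K) : (w - c)⁻¹ ∉ K := fun h => hw <| by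
  simpa using K.add_mem (K.inv_mem h) hc

/-- `p` and `q` form the Q-pair of `a`, shifted by one: `p n` and `q n` are the paper's
`p_{n-1}` and `q_{n-1}`. -/
structure IsQPair {R : Type*} [Ring R] (a p q : ℕ → R) : Prop where
  p_zero : p 0 = 1
  p_one : p 1 = a 0
  p_add_two : ∀ n, p (n + 2) = a (n + 1) * p (n + 1) + p n
  q_zero : q 0 = 0
  q_one : q 1 = 1
  q_add_two : ∀ n, q (n + 2) = a (n + 1) * q (n + 1) + q n

section Field

variable {F : Type*} [Field F] {z a p q : ℕ → F}

theorem iterate_mul_add_succ (hz : ∀ n, (z n - a n) * z (n + 1) = 1) {s : ℕ → F}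
    (hs : ∀ n, s (n + 2) = a (n + 1) * s (n + 1) + s n) (n : ℕ) :
    z (n + 2) * s (n + 2) + s (n + 1) = z (n + 2) * (z (n + 1) * s (n + 1) + s n) := by
  rw [hs]
  linear_combination (-s (n + 1)) * hz (n + 1)

theorem IsQPair.remainder_add_two (hpq : IsQPair a p q) (x : F) (n : ℕ) :
    q (n + 2) * x - p (n + 2) = a (n + 1) * (q (n + 1) * x - p (n + 1)) + (q n * x - p n) := by
  rw [hpq.q_add_two, hpq.p_add_two]
  ring

/-- `z 0 = (z (n + 1) * p (n + 1) + p n) / (z (n + 1) * q (n + 1) + q n)`, denominators cleared. -/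
theorem IsQPair.iterate_mul_remainder_add_remainder (hpq : IsQPair a p q)
    (hz : ∀ n, (z n - a n) * z (n + 1) = 1) (n : ℕ) :
    z (n + 1) * (q (n + 1) * z 0 - p (n + 1)) + (q n * z 0 - p n) = 0 := by
  induction n with
  | zero =>
    rw [hpq.q_one, hpq.p_one, hpq.q_zero, hpq.p_zero]
    linear_combination hz 0
  | succ n ih =>
    exact (iterate_mul_add_succ (s := fun k => q k * z 0 - p k) hz (hpq.remainder_add_two (z 0))
      n).trans (by rw [ih, mul_zero])

theorem IsQPair.remainder_succ (hpq : IsQPair a p q) (hz : ∀ n, (z n - a n) * z (n + 1) = 1)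
    (n : ℕ) : q (n + 1) * z 0 - p (n + 1) = -(z n - a n) * (q n * z 0 - p n) := by
  linear_combination (z n - a n) * hpq.iterate_mul_remainder_add_remainder hz n
    - (q (n + 1) * z 0 - p (n + 1)) * hz n

theorem IsQPair.remainder_mul_denominator (hpq : IsQPair a p q)
    (hz : ∀ n, (z n - a n) * z (n + 1) = 1) (n : ℕ) :
    (q (n + 1) * z 0 - p (n + 1)) * (z (n + 1) * q (n + 1) + q n) = (-1) ^ n := by
  induction n with
  | zero =>
    rw [hpq.q_one, hpq.p_one, hpq.q_zero]
    linear_combination hz 0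
  | succ n ih =>
    rw [iterate_mul_add_succ hz hpq.q_add_two n, hpq.remainder_succ hz (n + 1)]
    linear_combination
      (-((q (n + 1) * z 0 - p (n + 1)) * (z (n + 1) * q (n + 1) + q n))) * hz (n + 1) - ih

end Field

section Normed

variable {𝕜 : Type*} [NormedField 𝕜] {z a p q : ℕ → 𝕜} {r : ℝ}

theorem IsQPair.norm_remainder_le (hpq : IsQPair a p q) (hz : ∀ n, (z n - a n) * z (n + 1) = 1)
    (hu : ∀ n, ‖z n - a n‖ ≤ r) (n : ℕ) : ‖q n * z 0 - p n‖ ≤ r ^ n := by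
  induction n with
  | zero => simp [hpq.q_zero, hpq.p_zero]
  | succ n ih =>
    rw [hpq.remainder_succ hz, norm_mul, norm_neg, pow_succ']
    exact mul_le_mul (hu n) ih (norm_nonneg _) ((norm_nonneg _).trans (hu 0))

theorem IsQPair.norm_sub_div_le_pow (hpq : IsQPair a p q) (hz : ∀ n, (z n - a n) * z (n + 1) = 1)
    (hu : ∀ n, ‖z n - a n‖ ≤ r) (n : ℕ) (hq : 1 ≤ ‖q (n + 1)‖) :
    ‖z 0 - p (n + 1) / q (n + 1)‖ ≤ r ^ (n + 1) := by
  have hq0 : q (n + 1) ≠ 0 := norm_pos_iff.mp (by linarith)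
  calc ‖z 0 - p (n + 1) / q (n + 1)‖ = ‖q (n + 1) * z 0 - p (n + 1)‖ / ‖q (n + 1)‖ := by
        rw [sub_div' hq0, mul_comm, norm_div]
    _ ≤ ‖q (n + 1) * z 0 - p (n + 1)‖ := div_le_self (norm_nonneg _) hq
    _ ≤ r ^ (n + 1) := hpq.norm_remainder_le hz hu (n + 1)

theorem one_sub_mul_norm_le_mul_norm_mul_add {u w Q Q' : 𝕜} (hu : ‖u‖ ≤ r) (huw : u * w = 1)
    (hQ : ‖Q'‖ ≤ ‖Q‖) : (1 - r) * ‖Q‖ ≤ r * ‖w * Q + Q'‖ := by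
  have hr : 0 ≤ r := (norm_nonneg u).trans hu
  have huw' : ‖u‖ * ‖w‖ = 1 := by rw [← norm_mul, huw, norm_one]
  have htri : ‖w‖ * ‖Q‖ ≤ ‖w * Q + Q'‖ + ‖Q'‖ := by
    simpa [norm_mul] using norm_sub_le (w * Q + Q') Q'
  calc (1 - r) * ‖Q‖ = ‖u‖ * (‖w‖ * ‖Q‖) - r * ‖Q‖ := by rw [← mul_assoc, huw']; ring
    _ ≤ r * (‖w‖ * ‖Q‖) - r * ‖Q'‖ := by gcongr
    _ ≤ r * ‖w * Q + Q'‖ := by rw [← mul_sub]; gcongr; linarith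

theorem IsQPair.norm_sub_div_le (hpq : IsQPair a p q) (hz : ∀ n, (z n - a n) * z (n + 1) = 1)
    (hu : ∀ n, ‖z n - a n‖ ≤ r) (hr1 : r < 1) (n : ℕ) (hqn : ‖q n‖ ≤ ‖q (n + 1)‖)
    (hq0 : q (n + 1) ≠ 0) :
    ‖z 0 - p (n + 1) / q (n + 1)‖ ≤ r / (1 - r) * (‖q (n + 1)‖ ^ 2)⁻¹ := by
  set Q := ‖q (n + 1)‖
  set G := ‖q (n + 1) * z 0 - p (n + 1)‖
  set D := ‖z (n + 1) * q (n + 1) + q n‖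
  have hQ : 0 < Q := norm_pos_iff.mpr hq0
  have hr : 0 < 1 - r := by linarith
  have hGD : G * D = 1 := by
    rw [← norm_mul, hpq.remainder_mul_denominator hz, norm_pow, norm_neg, norm_one, one_pow]
  have hD : (1 - r) * Q ≤ r * D := one_sub_mul_norm_le_mul_norm_mul_add (hu n) (hz n) hqn
  calc ‖z 0 - p (n + 1) / q (n + 1)‖ = G / Q := by rw [sub_div' hq0, mul_comm, norm_div]
    _ = G * ((1 - r) * Q) / (1 - r) / Q ^ 2 := by field_simp
    _ ≤ G * (r * D) / (1 - r) / Q ^ 2 := by gcongr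
    _ = r / (1 - r) * (Q ^ 2)⁻¹ := by rw [mul_left_comm, hGD, mul_one]; ring

theorem IsQPair.q_add_one_ne_zero (hpq : IsQPair a p q) (hz : ∀ n, (z n - a n) * z (n + 1) = 1)
    (hu : ∀ n, ‖z n - a n‖ ≤ r) (hr1 : r < 1) (S : Subring 𝕜) [DiscreteTopology S]
    (hpS : ∀ n, p n ∈ S) (n : ℕ) : q (n + 1) ≠ 0 := by
  intro hq0
  have hG : q (n + 1) * z 0 - p (n + 1) = -p (n + 1) := by rw [hq0]; ring
  have hp0 : p (n + 1) ≠ 0 := fun h => by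
    have hprod := hpq.remainder_mul_denominator hz n
    rw [hG, h, neg_zero, zero_mul] at hprod
    exact pow_ne_zero n (neg_ne_zero.mpr one_ne_zero) hprod.symm
  have hle := hpq.norm_remainder_le hz hu (n + 1)
  rw [hG, norm_neg] at hle
  have hlt : r ^ (n + 1) < 1 :=
    pow_lt_one₀ ((norm_nonneg _).trans (hu 0)) hr1 (Nat.succ_ne_zero n)
  linarith [S.one_le_norm_of_mem (hpS (n + 1)) hp0]

end Normed

theorem algorithm_convergents_general (Γ : Subring ℂ) (hΓdisc : DiscreteTopology Γ)
    (f : ℂ → ℂ) (hfΓ : ∀ w, f w ∈ Γ)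
    (K : Subfield ℂ) (hK : K = Subfield.closure (Γ : Set ℂ))
    (r : ℝ) (hr1 : r < 1)
    (hfund : ∀ w : ℂ, w ∉ K → ‖w - f w‖ ≤ r)
    (z : ℂ) (hzK : z ∉ K)
    (zs : ℕ → ℂ) (hzs0 : zs 0 = z)
    (hzsrec : ∀ n, zs (n + 1) = (zs n - f (zs n))⁻¹)
    (a : ℕ → ℂ) (ha : ∀ n, a n = f (zs n))
    (p q : ℕ → ℂ)
    (hp0 : p 0 = 1) (hp1 : p 1 = a 0)
    (hp : ∀ n, p (n + 2) = a (n + 1) * p (n + 1) + p n)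
    (hq0 : q 0 = 0) (hq1 : q 1 = 1)
    (hq : ∀ n, q (n + 2) = a (n + 1) * q (n + 1) + q n) :
    (∀ n : ℕ, q (n + 1) ≠ 0) ∧
    Filter.Tendsto (fun n => p (n + 1) / q (n + 1)) Filter.atTop (nhds z) ∧
    (∀ n : ℕ, ‖q n‖ < ‖q (n + 1)‖ →
      ‖z - p (n + 1) / q (n + 1)‖ ≤ r / (1 - r) * (‖q (n + 1)‖ ^ 2)⁻¹) := by
  subst hzs0
  have hΓK {x : ℂ} (hx : x ∈ Γ) : x ∈ K := hK ▸ Subfield.subset_closure hx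
  have haΓ (n : ℕ) : a n ∈ Γ := by rw [ha]; exact hfΓ _
  have hzsK (n : ℕ) : zs n ∉ K := by
    induction n with
    | zero => exact hzK
    | succ n ih => rw [hzsrec]; exact Subfield.inv_sub_notMem ih (hΓK (hfΓ _))
  have hz (n : ℕ) : (zs n - a n) * zs (n + 1) = 1 := by
    rw [hzsrec, ha]
    exact mul_inv_cancel₀ (sub_ne_zero.mpr fun h => hzsK n (h ▸ hΓK (hfΓ _)))
  have hu (n : ℕ) : ‖zs n - a n‖ ≤ r := by rw [ha]; exact hfund _ (hzsK n)
  have hpq : IsQPair a p q := ⟨hp0, hp1, hp, hq0, hq1, hq⟩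
  have hpΓ := Subring.mem_of_mul_add_recurrence haΓ (hp0 ▸ one_mem Γ) (hp1 ▸ haΓ 0) hp
  have hqΓ := Subring.mem_of_mul_add_recurrence haΓ (hq0 ▸ zero_mem Γ) (hq1 ▸ one_mem Γ) hq
  have hq_ne := hpq.q_add_one_ne_zero hz hu hr1 Γ hpΓ
  refine ⟨hq_ne, ?_, fun n hlt => hpq.norm_sub_div_le hz hu hr1 n hlt.le (hq_ne n)⟩
  rw [tendsto_iff_norm_sub_tendsto_zero]
  refine squeeze_zero_norm (fun n => ?_) ((tendsto_pow_atTop_nhds_zero_of_lt_one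
    ((norm_nonneg _).trans (hu 0)) hr1).comp (tendsto_add_atTop_nat 1))
  rw [norm_norm, norm_sub_rev]
  exact hpq.norm_sub_div_le_pow hz hu n (Γ.one_le_norm_of_mem (hqΓ _) (hq_ne n))

/-- Theorem (algorithmic case): for a `Γ`-valued algorithm `f` whose fundamental
set is contained in a ball of radius `r < 1` centered at `0`, and `z ∉ K`
(`K` the subfield generated by `Γ`), the denominators of the convergents of the
continued fraction expansion of `z` with respect to `f` are nonzero, the
convergents tend to `z`, and whenever `|q₍ₙ₋₁₎| < |qₙ|` one has
`|z − pₙ/qₙ| ≤ (r/(1−r)) |qₙ|⁻²`.  (Q-pairs are indexed with offset one.) -/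
theorem algorithm_convergents (Γ : Subring ℂ) (hΓdisc : DiscreteTopology Γ)
    (f : ℂ → ℂ) (hfΓ : ∀ w, f w ∈ Γ) (hfalg : ∀ w, ‖w - f w‖ ≤ 1)
    (K : Subfield ℂ) (hK : K = Subfield.closure (Γ : Set ℂ))
    (r : ℝ) (hr0 : 0 < r) (hr1 : r < 1)
    (hfund : ∀ w : ℂ, w ∉ K → ‖w - f w‖ ≤ r)
    (z : ℂ) (hzK : z ∉ K)
    (zs : ℕ → ℂ) (hzs0 : zs 0 = z)
    (hzsrec : ∀ n, zs (n + 1) = (zs n - f (zs n))⁻¹)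
    (a : ℕ → ℂ) (ha : ∀ n, a n = f (zs n))
    (p q : ℕ → ℂ)
    (hp0 : p 0 = 1) (hp1 : p 1 = a 0)
    (hp : ∀ n, p (n + 2) = a (n + 1) * p (n + 1) + p n)
    (hq0 : q 0 = 0) (hq1 : q 1 = 1)
    (hq : ∀ n, q (n + 2) = a (n + 1) * q (n + 1) + q n) :
    (∀ n : ℕ, q (n + 1) ≠ 0) ∧
    Filter.Tendsto (fun n => p (n + 1) / q (n + 1)) Filter.atTop (nhds z) ∧
    (∀ n : ℕ, ‖q n‖ < ‖q (n + 1)‖ →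
      ‖z - p (n + 1) / q (n + 1)‖ ≤ r / (1 - r) * (‖q (n + 1)‖ ^ 2)⁻¹) :=
  algorithm_convergents_general Γ hΓdisc f hfΓ K hK r hr1 hfund z hzK zs hzs0 hzsrec a ha p q hp0
    hp1 hp hq0 hq1 hq
end

section
/- Let Γ be a discrete subring of ℂ, K the subfield of ℂ generated by Γ, and f : ℂ → Γ a Γ-valued algorithm. Let z be a quadratic surd over K and let (z_n)_{n≥0} be the iteration sequence of z with respect to f, with partial quotients (a_n)_{n≥0} and Q-pair (p_n), (q_n). Suppose: (i) there exists α > 0 such that |z_n| > 1 + α for all n ≥ 1; and (ii) |q_n| → ∞ as n → ∞. Then the sequence (a_n)_{n≥0} is eventually periodic, i.e., there exist m ≥ 0 and k ≥ 1 such that a_{n+k} = a_n for all n ≥ m. -/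
/-!
Writing `εₙ = pₙ - z qₙ`, the Q-pair identities give `z = (pₙ zₙ₊₁ + pₙ₋₁) / (qₙ zₙ₊₁ + qₙ₋₁)`,
so `zₙ₊₁` is a root of `Q(pₙ X + pₙ₋₁, qₙ X + qₙ₋₁)`, where `Q` is the form `A X² + B X Y + C Y²`
with coefficients in `Γ` vanishing at `(z, 1)`. This transformed quadratic has coefficients in
`Γ`, and it is nonzero because `pₙ qₙ₋₁ - pₙ₋₁ qₙ = ±1`. Since `εₙ₊₁ zₙ₊₁ = -εₙ` and
`|zₙ₊₁| ≥ 1 + α`, both `εₙ` and `qₙ εₙ` stay bounded; as `Q(pₙ, qₙ) = A εₙ² + (2Az + B) qₙ εₙ`,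
the outer coefficients are bounded, and the middle one is bounded too because the discriminant
is invariant. A discrete subring has only finitely many elements of bounded size, so the `zₙ`
take only finitely many values, and two equal iterates make the iteration periodic from there on.
-/

open Polynomial Metric

section QuadraticForm

variable {R : Type*} [CommRing R]

def quadEval (t : R × R × R) (w : R) : R := t.1 * w ^ 2 + t.2.1 * w + t.2.2

def quadForm (A B C x y : R) : R := A * x ^ 2 + B * x * y + C * y ^ 2

/-- The coefficients of `Q(x' X + x Y, y' X + y Y)`, where `Q = quadForm A B C`. -/
def substCoeffs (A B C x' y' x y : R) : R × R × R :=
  (quadForm A B C x' y', 2 * A * x' * x + B * (x' * y + x * y') + 2 * C * y' * y,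
    quadForm A B C x y)

theorem quadEval_substCoeffs_eq_zero {A B C x' y' x y z w : R}
    (hz : quadEval (A, B, C) z = 0) (hw : z * (y' * w + y) = x' * w + x) :
    quadEval (substCoeffs A B C x' y' x y) w = 0 := by
  simp only [quadEval, substCoeffs, quadForm] at hz ⊢
  linear_combination (y' * w + y) ^ 2 * hz
    - (A * (x' * w + x + z * (y' * w + y)) + B * (y' * w + y)) * hw

theorem substCoeffs_ne_zero {A B C x' y' x y : R} (hA : A ≠ 0)
    (hdet : (x' * y - x * y') ^ 2 = 1) : substCoeffs A B C x' y' x y ≠ 0 := by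
  intro h0
  have key : (substCoeffs A B C x' y' x y).1 * y ^ 2
      - (substCoeffs A B C x' y' x y).2.1 * (y * y')
      + (substCoeffs A B C x' y' x y).2.2 * y' ^ 2 = A * (x' * y - x * y') ^ 2 := by
    simp only [substCoeffs, quadForm]; ring
  simp [h0, hdet] at key
  exact hA key.symm

theorem discrim_substCoeffs (A B C x' y' x y : R) :
    discrim (substCoeffs A B C x' y' x y).1 (substCoeffs A B C x' y' x y).2.1
      (substCoeffs A B C x' y' x y).2.2 = discrim A B C * (x' * y - x * y') ^ 2 := by
  simp only [discrim, substCoeffs, quadForm]; ring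

theorem quadForm_eq_of_quadEval_eq_zero {A B C z : R} (hz : quadEval (A, B, C) z = 0)
    (x y : R) :
    quadForm A B C x y = A * (x - z * y) ^ 2 + (2 * A * z + B) * (y * (x - z * y)) := by
  simp only [quadEval, quadForm] at hz ⊢
  linear_combination y ^ 2 * hz

theorem substCoeffs_mem {S : Subring R} {A B C x' y' x y : R} (hA : A ∈ S) (hB : B ∈ S)
    (hC : C ∈ S) (hx' : x' ∈ S) (hy' : y' ∈ S) (hx : x ∈ S) (hy : y ∈ S) :
    substCoeffs A B C x' y' x y ∈ (S : Set R) ×ˢ (S : Set R) ×ˢ (S : Set R) := by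
  have h2 : (2 : R) ∈ S := ofNat_mem S 2
  have hQ : ∀ {u v}, u ∈ S → v ∈ S → quadForm A B C u v ∈ S := fun hu hv =>
    S.add_mem (S.add_mem (S.mul_mem hA (S.pow_mem hu 2)) (S.mul_mem (S.mul_mem hB hu) hv))
      (S.mul_mem hC (S.pow_mem hv 2))
  refine ⟨hQ hx' hy', S.add_mem (S.add_mem ?_ ?_) ?_, hQ hx hy⟩
  · exact S.mul_mem (S.mul_mem (S.mul_mem h2 hA) hx') hx
  · exact S.mul_mem hB (S.add_mem (S.mul_mem hx' hy) (S.mul_mem hx hy'))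
  · exact S.mul_mem (S.mul_mem (S.mul_mem h2 hC) hy') hy

end QuadraticForm

theorem sq_norm_le_norm_discrim_add {𝕜 : Type*} [NormedField 𝕜] (a b c : 𝕜) :
    ‖b‖ ^ 2 ≤ ‖discrim a b c‖ + 4 * ‖a‖ * ‖c‖ := by
  have hb : b ^ 2 = discrim a b c + 4 * a * c := by rw [discrim]; ring
  calc ‖b‖ ^ 2 = ‖discrim a b c + 4 * a * c‖ := by rw [← norm_pow, hb]
    _ ≤ ‖discrim a b c‖ + ‖4 * a * c‖ := norm_add_le _ _
    _ ≤ ‖discrim a b c‖ + 4 * ‖a‖ * ‖c‖ := by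
      rw [norm_mul, norm_mul]
      gcongr
      simpa using Nat.norm_cast_le (α := 𝕜) 4

section Roots

variable {K : Type*} [Field K]

theorem finite_setOf_quadEval_eq_zero {t : K × K × K} (ht : t ≠ 0) :
    {w | quadEval t w = 0}.Finite := by
  obtain ⟨A, B, C⟩ := t
  have hP : (Polynomial.C A * X ^ 2 + Polynomial.C B * X + Polynomial.C C) ≠ 0 := by
    intro h0
    apply ht
    have h2 := congrArg (coeff · 2) h0
    have h1 := congrArg (coeff · 1) h0
    have h0' := congrArg (coeff · 0) h0
    simp [coeff_X, coeff_C] at h2 h1 h0'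
    simp [h2, h1, h0']
  convert finite_setOfPred_isRoot hP using 2
  simp [quadEval]

def quadraticRoots (S : Set K) : Set K :=
  {w | ∃ t ∈ S ×ˢ S ×ˢ S, t ≠ 0 ∧ quadEval t w = 0}

theorem Set.Finite.quadraticRoots {S : Set K} (hS : S.Finite) :
    (quadraticRoots S).Finite := by
  refine (((hS.prod (hS.prod hS)).sdiff (t := {0})).biUnion
    fun t ht => finite_setOf_quadEval_eq_zero ht.2).subset ?_
  rintro w ⟨t, hS3, ht, hw⟩
  exact Set.mem_biUnion ⟨hS3, ht⟩ hw

end Roots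

namespace Subring

variable {F : Type*} [Field F] {S : Subring F}

theorem exists_ne_zero_mul_mem_of_mem_closure {x : F} (hx : x ∈ Subfield.closure (S : Set F)) :
    ∃ t ∈ S, t ≠ 0 ∧ x * t ∈ S := by
  rw [Subfield.mem_closure_iff, Subring.closure_eq] at hx
  obtain ⟨y, hy, t, ht, rfl⟩ := hx
  by_cases ht0 : t = 0
  · exact ⟨1, S.one_mem, one_ne_zero, by simp [ht0]⟩
  · exact ⟨t, ht, ht0, by rwa [div_mul_cancel₀ _ ht0]⟩

theorem exists_quadEval_eq_zero_of_mem_closure {A B C z : F}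
    (hA : A ∈ Subfield.closure (S : Set F)) (hB : B ∈ Subfield.closure (S : Set F))
    (hC : C ∈ Subfield.closure (S : Set F)) (hA0 : A ≠ 0) (hz : quadEval (A, B, C) z = 0) :
    ∃ A' ∈ S, ∃ B' ∈ S, ∃ C' ∈ S, A' ≠ 0 ∧ quadEval (A', B', C') z = 0 := by
  obtain ⟨tA, htA, htA0, hAt⟩ := exists_ne_zero_mul_mem_of_mem_closure hA
  obtain ⟨tB, htB, htB0, hBt⟩ := exists_ne_zero_mul_mem_of_mem_closure hB
  obtain ⟨tC, htC, htC0, hCt⟩ := exists_ne_zero_mul_mem_of_mem_closure hC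
  refine ⟨A * tA * (tB * tC), S.mul_mem hAt (S.mul_mem htB htC),
    B * tB * (tA * tC), S.mul_mem hBt (S.mul_mem htA htC),
    C * tC * (tA * tB), S.mul_mem hCt (S.mul_mem htA htB),
    mul_ne_zero (mul_ne_zero hA0 htA0) (mul_ne_zero htB0 htC0), ?_⟩
  simp only [quadEval] at hz ⊢
  linear_combination tA * tB * tC * hz

end Subring

theorem Subring.finite_closedBall_inter {E : Type*} [NormedRing E] [ProperSpace E]
    (Γ : Subring E) [DiscreteTopology Γ] (R : ℝ) : (closedBall 0 R ∩ (Γ : Set E)).Finite :=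
  finite_isBounded_inter_isClosed (isDiscrete_iff_discreteTopology.mpr ‹_›) isBounded_closedBall
    (AddSubgroup.isClosed_of_discrete (H := Γ.toAddSubgroup))

/-- `p (n + 1)` and `q (n + 1)` are the paper's `pₙ` and `qₙ`; `p 0`, `q 0` are `p₋₁`, `q₋₁`. -/
structure IsQPair_s11 {R : Type*} [CommRing R] (a p q : ℕ → R) : Prop where
  p_zero : p 0 = 1
  p_one : p 1 = a 0
  p_add_two : ∀ n, p (n + 2) = a (n + 1) * p (n + 1) + p n
  q_zero : q 0 = 0
  q_one : q 1 = 1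
  q_add_two : ∀ n, q (n + 2) = a (n + 1) * q (n + 1) + q n

namespace IsQPair_s11

section CommRing

variable {R : Type*} [CommRing R] {a p q zs : ℕ → R}

theorem det_eq_neg_one_pow (h : IsQPair_s11 a p q) (n : ℕ) :
    p (n + 1) * q n - p n * q (n + 1) = (-1) ^ (n + 1) := by
  induction n with
  | zero => simp [h.p_zero, h.p_one, h.q_zero, h.q_one]
  | succ n ih => rw [h.p_add_two, h.q_add_two]; linear_combination -ih

theorem mem_subring (h : IsQPair_s11 a p q) {S : Subring R} (ha : ∀ n, a n ∈ S) (n : ℕ) :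
    p n ∈ S ∧ q n ∈ S := by
  induction n using Nat.twoStepInduction with
  | zero => exact ⟨h.p_zero ▸ S.one_mem, h.q_zero ▸ S.zero_mem⟩
  | one => exact ⟨h.p_one ▸ ha 0, h.q_one ▸ S.one_mem⟩
  | more n ih₀ ih₁ =>
    rw [h.p_add_two, h.q_add_two]
    exact ⟨S.add_mem (S.mul_mem (ha _) ih₁.1) ih₀.1, S.add_mem (S.mul_mem (ha _) ih₁.2) ih₀.2⟩

theorem num_eq_mul_denom (h : IsQPair_s11 a p q) (hzs : ∀ n, zs (n + 1) * (zs n - a n) = 1)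
    (n : ℕ) : zs 0 * (q (n + 1) * zs (n + 1) + q n) = p (n + 1) * zs (n + 1) + p n := by
  induction n with
  | zero => rw [h.p_one, h.q_one, h.p_zero, h.q_zero]; linear_combination hzs 0
  | succ n ih =>
    rw [h.p_add_two, h.q_add_two]
    linear_combination zs (n + 2) * ih + (p (n + 1) - zs 0 * q (n + 1)) * hzs (n + 1)

theorem error_succ_mul (h : IsQPair_s11 a p q) (hzs : ∀ n, zs (n + 1) * (zs n - a n) = 1)
    (n : ℕ) : (p (n + 1) - zs 0 * q (n + 1)) * zs (n + 1) = -(p n - zs 0 * q n) := by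
  linear_combination -(h.num_eq_mul_denom hzs n)

end CommRing

section NormedField

variable {𝕜 : Type*} [NormedField 𝕜] {a p q zs : ℕ → 𝕜}

theorem norm_error_le_one (h : IsQPair_s11 a p q) (hzs : ∀ n, zs (n + 1) * (zs n - a n) = 1)
    (hone : ∀ n, 1 ≤ ‖zs (n + 1)‖) (n : ℕ) : ‖p n - zs 0 * q n‖ ≤ 1 := by
  induction n with
  | zero => simp [h.p_zero, h.q_zero]
  | succ n ih =>
    calc ‖p (n + 1) - zs 0 * q (n + 1)‖
        ≤ ‖p (n + 1) - zs 0 * q (n + 1)‖ * ‖zs (n + 1)‖ :=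
          le_mul_of_one_le_right (norm_nonneg _) (hone n)
      _ = ‖p n - zs 0 * q n‖ := by rw [← norm_mul, h.error_succ_mul hzs, norm_neg]
      _ ≤ 1 := ih

/-- `c / (c ^ 2 - 1)` is the fixed point of `M ↦ (1 + M / c) / c`, the recursion that
`‖qₙ εₙ‖` obeys. -/
theorem norm_q_mul_error_le (h : IsQPair_s11 a p q) (hzs : ∀ n, zs (n + 1) * (zs n - a n) = 1)
    {c : ℝ} (hc : 1 < c) (hzc : ∀ n, c ≤ ‖zs (n + 1)‖) (n : ℕ) :
    ‖q n * (p n - zs 0 * q n)‖ ≤ c / (c ^ 2 - 1) := by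
  set M := c / (c ^ 2 - 1) with hM_def
  have hc2 : 0 < c ^ 2 - 1 := by nlinarith
  have hM : M * c ^ 2 = c + M := by rw [hM_def]; field_simp; ring
  induction n with
  | zero => simp only [h.q_zero, zero_mul, norm_zero]; positivity
  | succ n ih =>
    have hv : ‖q n * (p (n + 1) - zs 0 * q (n + 1))‖ * c ≤ M :=
      calc ‖q n * (p (n + 1) - zs 0 * q (n + 1))‖ * c
          ≤ ‖q n * (p (n + 1) - zs 0 * q (n + 1))‖ * ‖zs (n + 1)‖ := by gcongr; exact hzc n
        _ = ‖q n * (p n - zs 0 * q n)‖ := by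
            rw [← norm_mul, mul_assoc, h.error_succ_mul hzs, mul_neg, norm_neg]
        _ ≤ M := ih
    have hu : ‖q (n + 1) * (p (n + 1) - zs 0 * q (n + 1))‖ * c
        ≤ 1 + ‖q n * (p (n + 1) - zs 0 * q (n + 1))‖ :=
      calc ‖q (n + 1) * (p (n + 1) - zs 0 * q (n + 1))‖ * c
          ≤ ‖q (n + 1) * (p (n + 1) - zs 0 * q (n + 1))‖ * ‖zs (n + 1)‖ := by
            gcongr; exact hzc n
        _ = ‖(-1) ^ n + q n * (p (n + 1) - zs 0 * q (n + 1))‖ := by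
            rw [← norm_mul, ← norm_neg]
            congr 1
            linear_combination -(q (n + 1) * h.error_succ_mul hzs n) - h.det_eq_neg_one_pow n
        _ ≤ 1 + ‖q n * (p (n + 1) - zs 0 * q (n + 1))‖ :=
            (norm_add_le _ _).trans (by rw [norm_pow, norm_neg, norm_one, one_pow])
    have : ‖q (n + 1) * (p (n + 1) - zs 0 * q (n + 1))‖ * c ^ 2 ≤ M * c ^ 2 := by
      nlinarith
    exact le_of_mul_le_mul_right this (by positivity)

theorem norm_quadForm_le (h : IsQPair_s11 a p q) (hzs : ∀ n, zs (n + 1) * (zs n - a n) = 1)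
    {c : ℝ} (hc : 1 < c) (hzc : ∀ n, c ≤ ‖zs (n + 1)‖) {A B C : 𝕜}
    (hz : quadEval (A, B, C) (zs 0) = 0) (n : ℕ) :
    ‖quadForm A B C (p n) (q n)‖ ≤ ‖A‖ + ‖2 * A * zs 0 + B‖ * (c / (c ^ 2 - 1)) := by
  rw [quadForm_eq_of_quadEval_eq_zero hz]
  refine (norm_add_le _ _).trans ?_
  rw [norm_mul, norm_mul, norm_pow]
  refine add_le_add (mul_le_of_le_one_right (norm_nonneg _) (pow_le_one₀ (norm_nonneg _) ?_))
    (mul_le_mul_of_nonneg_left (h.norm_q_mul_error_le hzs hc hzc n) (norm_nonneg _))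
  exact h.norm_error_le_one hzs (fun k => (hc.trans_le (hzc k)).le) n

theorem exists_forall_mem_quadraticRoots (h : IsQPair_s11 a p q)
    (hzs : ∀ n, zs (n + 1) * (zs n - a n) = 1) {c : ℝ} (hc : 1 < c)
    (hzc : ∀ n, c ≤ ‖zs (n + 1)‖) {Γ : Subring 𝕜} (ha : ∀ n, a n ∈ Γ) {A B C : 𝕜}
    (hA : A ∈ Γ) (hB : B ∈ Γ) (hC : C ∈ Γ) (hA0 : A ≠ 0) (hz : quadEval (A, B, C) (zs 0) = 0) :
    ∃ R, ∀ n, zs (n + 1) ∈ quadraticRoots (closedBall 0 R ∩ (Γ : Set 𝕜)) := by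
  set R₀ := ‖A‖ + ‖2 * A * zs 0 + B‖ * (c / (c ^ 2 - 1))
  have hform := h.norm_quadForm_le hzs hc hzc hz
  refine ⟨max R₀ √(‖discrim A B C‖ + 4 * R₀ ^ 2), fun n => ?_⟩
  have hdet : (p (n + 1) * q n - p n * q (n + 1)) ^ 2 = 1 := by
    rw [h.det_eq_neg_one_pow, ← pow_mul, pow_mul', neg_one_sq, one_pow]
  have hdisc := discrim_substCoeffs A B C (p (n + 1)) (q (n + 1)) (p n) (q n)
  rw [hdet, mul_one] at hdisc
  obtain ⟨hΓ₁, hΓ₂, hΓ₃⟩ := substCoeffs_mem hA hB hC (h.mem_subring ha (n + 1)).1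
    (h.mem_subring ha (n + 1)).2 (h.mem_subring ha n).1 (h.mem_subring ha n).2
  set t := substCoeffs A B C (p (n + 1)) (q (n + 1)) (p n) (q n)
  refine ⟨t, ⟨⟨?_, hΓ₁⟩, ⟨?_, hΓ₂⟩, ⟨?_, hΓ₃⟩⟩, substCoeffs_ne_zero hA0 hdet,
    quadEval_substCoeffs_eq_zero hz (h.num_eq_mul_denom hzs n)⟩ <;> rw [mem_closedBall_zero_iff]
  · exact (hform (n + 1)).trans (le_max_left _ _)
  · refine le_max_of_le_right (Real.le_sqrt_of_sq_le ?_)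
    refine (sq_norm_le_norm_discrim_add t.1 t.2.1 t.2.2).trans ?_
    have hR₀ : 0 ≤ R₀ := (norm_nonneg _).trans (hform 0)
    rw [hdisc, sq, ← mul_assoc]
    gcongr
    exacts [hform (n + 1), hform n]
  · exact (hform n).trans (le_max_left _ _)

end NormedField

end IsQPair_s11

theorem eventually_periodic_of_eq {α : Type*} {g : α → α} {x : ℕ → α}
    (hx : ∀ n, x (n + 1) = g (x n)) {i j : ℕ} (hij : i ≤ j) (h : x i = x j) :
    ∀ n, i ≤ n → x (n + (j - i)) = x n := by
  intro n hn
  induction n, hn using Nat.le_induction with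
  | base => rw [Nat.add_sub_cancel' hij, h]
  | succ n _ ih => rw [Nat.add_right_comm, hx, ih, hx]

theorem quadratic_surd_eventually_periodic_general (Γ : Subring ℂ) (hΓdisc : DiscreteTopology Γ)
    (K : Subfield ℂ) (hK : K = Subfield.closure (Γ : Set ℂ))
    (f : ℂ → ℂ) (hfΓ : ∀ w, f w ∈ Γ)
    (z : ℂ)
    (hsurd : ∃ A B C : ℂ, A ∈ K ∧ B ∈ K ∧ C ∈ K ∧ A ≠ 0 ∧
      A * z ^ 2 + B * z + C = 0)
    (zs : ℕ → ℂ) (hzs0 : zs 0 = z)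
    (hzsrec : ∀ n, zs (n + 1) = (zs n - f (zs n))⁻¹)
    (a : ℕ → ℂ) (ha : ∀ n, a n = f (zs n))
    (p q : ℕ → ℂ)
    (hp0 : p 0 = 1) (hp1 : p 1 = a 0)
    (hp : ∀ n, p (n + 2) = a (n + 1) * p (n + 1) + p n)
    (hq0 : q 0 = 0) (hq1 : q 1 = 1)
    (hq : ∀ n, q (n + 2) = a (n + 1) * q (n + 1) + q n)
    (α : ℝ) (hα : 0 < α)
    (hzsabs : ∀ n, 1 ≤ n → 1 + α < ‖zs n‖) :
    ∃ m k : ℕ, 1 ≤ k ∧ ∀ n, m ≤ n → a (n + k) = a n := by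
  have hzc : ∀ n, 1 + α ≤ ‖zs (n + 1)‖ := fun n => (hzsabs (n + 1) n.succ_pos).le
  have hzs : ∀ n, zs (n + 1) * (zs n - a n) = 1 := fun n => by
    have hne : zs (n + 1) ≠ 0 := norm_pos_iff.mp (by linarith [hzc n])
    rw [hzsrec] at hne ⊢
    rw [ha]
    exact inv_mul_cancel₀ (by simpa using hne)
  subst hK hzs0
  obtain ⟨A, B, C, hA, hB, hC, hA0, hz⟩ := hsurd
  obtain ⟨A', hA', B', hB', C', hC', hA0', hz'⟩ :=
    Subring.exists_quadEval_eq_zero_of_mem_closure hA hB hC hA0 hz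
  obtain ⟨R, hR⟩ := (IsQPair_s11.mk hp0 hp1 hp hq0 hq1 hq).exists_forall_mem_quadraticRoots hzs
    (by linarith) hzc (fun n => ha n ▸ hfΓ _) hA' hB' hC' hA0' hz'
  obtain ⟨i, j, hij, hzij⟩ :=
    Set.Finite.exists_lt_map_eq_of_forall_mem hR (Γ.finite_closedBall_inter R).quadraticRoots
  refine ⟨i + 1, j - i, by omega, fun n hn => ?_⟩
  have hper := eventually_periodic_of_eq (g := fun w => (w - f w)⁻¹) hzsrec
    (i := i + 1) (j := j + 1) (by omega) hzij n hn
  rw [Nat.add_sub_add_right] at hper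
  rw [ha, ha, hper]

/-- Lagrange-type theorem, algorithmic case: if `z` is a quadratic surd over
the subfield `K` generated by a discrete subring `Γ`, and the iteration
sequence of `z` with respect to a `Γ`-valued algorithm `f` satisfies
`|zₙ| > 1 + α` for all `n ≥ 1` (some `α > 0`) and `|qₙ| → ∞`, then the
sequence of partial quotients is eventually periodic.
(Q-pairs are indexed with offset one, so `q (n+1) = qₙ`.) -/
theorem quadratic_surd_eventually_periodic (Γ : Subring ℂ) (hΓdisc : DiscreteTopology Γ)
    (K : Subfield ℂ) (hK : K = Subfield.closure (Γ : Set ℂ))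
    (f : ℂ → ℂ) (hfΓ : ∀ w, f w ∈ Γ) (hfalg : ∀ w, ‖w - f w‖ ≤ 1)
    (z : ℂ) (hzK : z ∉ K)
    (hsurd : ∃ A B C : ℂ, A ∈ K ∧ B ∈ K ∧ C ∈ K ∧ A ≠ 0 ∧
      A * z ^ 2 + B * z + C = 0)
    (zs : ℕ → ℂ) (hzs0 : zs 0 = z)
    (hzsrec : ∀ n, zs (n + 1) = (zs n - f (zs n))⁻¹)
    (a : ℕ → ℂ) (ha : ∀ n, a n = f (zs n))
    (p q : ℕ → ℂ)
    (hp0 : p 0 = 1) (hp1 : p 1 = a 0)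
    (hp : ∀ n, p (n + 2) = a (n + 1) * p (n + 1) + p n)
    (hq0 : q 0 = 0) (hq1 : q 1 = 1)
    (hq : ∀ n, q (n + 2) = a (n + 1) * q (n + 1) + q n)
    (α : ℝ) (hα : 0 < α)
    (hzsabs : ∀ n, 1 ≤ n → 1 + α < ‖zs n‖)
    (hqinf : Filter.Tendsto (fun n => ‖q (n + 1)‖) Filter.atTop Filter.atTop) :
    ∃ m k : ℕ, 1 ≤ k ∧ ∀ n, m ≤ n → a (n + k) = a n :=
  quadratic_surd_eventually_periodic_general Γ hΓdisc K hK f hfΓ z hsurd zs hzs0 hzsrec a ha p q hp0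
    hp1 hp hq0 hq1 hq α hα hzsabs
end
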